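/- For a uniformly random injection f : Fin N → Fin m (with N ≤ m), and any index i and any function g from the restriction of f to Fin N \ {i} to Fin m, the probability that g(f restricted away from i) = f(i) is at most 1/(m − N + 1). -/

import Mathlib

/-!
Restricting an injection `f : α ↪ β` to `α \ {a}` loses exactly the value `f a`, which may be any
of the `|β| - |α| + 1` points outside the image of the restriction; so `|α ↪ β|` is
`|β| - |α| + 1` times the number of restrictions. A guess that sees the restriction is right for
at most one `f` per restriction, hence with probability at most `1 / (|β| - |α| + 1)`.
-/

open Fintype

section

variable {α β : Type*} [Fintype α] [DecidableEq α] [Fintype β]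

theorem card_embedding_eq_mul_card_embedding_subtype_ne (a : α) (h : card α ≤ card β) :
    card (α ↪ β) = (card β - card α + 1) * card ({b // b ≠ a} ↪ β) := by
  have hα : card {b // b ≠ a} + 1 = card α :=
    card_option.symm.trans (card_congr (Equiv.optionSubtypeNe a))
  rw [card_embedding_eq, card_embedding_eq, ← hα, Nat.descFactorial_succ]
  congr 1
  omega

theorem card_embedding_guess_le [DecidableEq β] (a : α) (g : ({b // b ≠ a} → β) → β) :
    card {f : α ↪ β // g (fun j => f j.1) = f a} ≤ card ({b // b ≠ a} ↪ β) := by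
  refine card_le_of_injective (fun f => (Function.Embedding.subtype _).trans f.1) ?_
  rintro ⟨f, hf⟩ ⟨f', hf'⟩ hff'
  have hrestrict : (fun j : {b // b ≠ a} => f j.1) = fun j => f' j.1 :=
    funext fun j => DFunLike.congr_fun hff' j
  ext j
  by_cases hj : j = a
  · subst hj
    rw [← hf, ← hf', hrestrict]
  · exact congrFun hrestrict ⟨j, hj⟩

theorem uniformOfFintype_embedding_guess_le [DecidableEq β] [Nonempty (α ↪ β)] (a : α)
    (g : ({b // b ≠ a} → β) → β) :
    (PMF.uniformOfFintype (α ↪ β)).toOuterMeasure {f | g (fun j => f j.1) = f a} ≤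
      ((card β - card α + 1 : ℕ) : ENNReal)⁻¹ := by
  have hcard := card_embedding_eq_mul_card_embedding_subtype_ne (β := β) a
    (Function.Embedding.nonempty_iff_card_le.mp ‹_›)
  rw [PMF.toOuterMeasure_uniformOfFintype_apply, ENNReal.le_inv_iff_mul_le,
    ← ENNReal.mul_div_right_comm]
  refine ENNReal.div_le_of_le_mul ?_
  rw [one_mul, hcard, mul_comm]
  exact_mod_cast Nat.mul_le_mul_left _ (card_embedding_guess_le a g)

end

/-- For a uniformly random injection `f : Fin N ↪ Fin m` (`N ≤ m`), any strategy `g`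
that sees the values of `f` away from index `i` guesses `f i` with probability at
most `1 / (m − N + 1)`. -/
theorem guess_missing_code_bound (N m : ℕ) (h : N ≤ m) (i : Fin N)
    (g : ({j : Fin N // j ≠ i} → Fin m) → Fin m) :
    haveI : Nonempty (Fin N ↪ Fin m) := ⟨Fin.castLEEmb h⟩
    (PMF.uniformOfFintype (Fin N ↪ Fin m)).toOuterMeasure
        {f | g (fun j => f j.1) = f i} ≤ (((m - N + 1 : ℕ) : ENNReal))⁻¹ := by
  have : Nonempty (Fin N ↪ Fin m) := ⟨Fin.castLEEmb h⟩
  simpa only [card_fin] using uniformOfFintype_embedding_guess_le i g
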